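/- Let G be a directed flow network with integer capacities, sources s_1, s_2 and sinks t_1, t_2, let X be a vertex cover of G and Y = V(G) ∖ X, and let (f^1, f^2) be a fractional 2-commodity flow in G. Suppose there are vertices u, v ∈ X and distinct vertices y, z ∈ Y such that the arcs (u, y), (y, v), (u, z) and (z, v) all exist in G and each of them is bi-fractional. Then there exists a fractional 2-commodity flow (g^1, g^2) in G whose value equals that of (f^1, f^2) for both commodities, which has at most as many fractional arcs as (f^1, f^2), and which has strictly fewer bi-fractional arcs than (f^1, f^2). -/

import Mathlib

/-- `x : ℝ` is an integer. -/
def IsAnInt (x : ℝ) : Prop := ∃ n : ℤ, x = n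

/-- A fractional 2-commodity flow on the directed flow network with arc set
`A`, capacities `cap`, sources `s 0, s 1` and sinks `t 0, t 1`. -/
def IsFracFlow {V : Type*} [Fintype V] (A : V → V → Prop) (cap : V → V → ℕ)
    (s t : Fin 2 → V) (f : Fin 2 → V → V → ℝ) : Prop :=
  (∀ i u v, 0 ≤ f i u v) ∧
  (∀ i u v, ¬ A u v → f i u v = 0) ∧
  (∀ u v, f 0 u v + f 1 u v ≤ cap u v) ∧
  (∀ i q, q ≠ s i → q ≠ t i → (∑ u, f i u q) = (∑ u, f i q u))

/-- The value of a single-commodity flow `g` with source `s`. -/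
def flowValue {V : Type*} [Fintype V] (s : V) (g : V → V → ℝ) : ℝ :=
  (∑ u, g s u) - ∑ u, g u s

/-- The number of fractional arcs of a 2-commodity flow. -/
noncomputable def fracArcs {V : Type*} [Fintype V] (f : Fin 2 → V → V → ℝ) : ℕ :=
  Set.ncard {p : V × V | ¬ IsAnInt (f 0 p.1 p.2) ∨ ¬ IsAnInt (f 1 p.1 p.2)}

/-- The number of bi-fractional arcs of a 2-commodity flow. -/
noncomputable def biFracArcs {V : Type*} [Fintype V] (f : Fin 2 → V → V → ℝ) : ℕ :=
  Set.ncard {p : V × V | ¬ IsAnInt (f 0 p.1 p.2) ∧ ¬ IsAnInt (f 1 p.1 p.2)}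

/-- The index of the other commodity. -/
def otherC : Fin 2 → Fin 2 := fun i => if i = 0 then 1 else 0

/-- The arc `(x, y)` is mono-fractional for commodity `i`. -/
def MonoFrac {V : Type*} (f : Fin 2 → V → V → ℝ) (i : Fin 2) (x y : V) : Prop :=
  ¬ IsAnInt (f i x y) ∧ IsAnInt (f (otherC i) x y)

/-- The arc `(x, y)` is bi-fractional. -/
def BiFrac {V : Type*} (f : Fin 2 → V → V → ℝ) (x y : V) : Prop :=
  ¬ IsAnInt (f 0 x y) ∧ ¬ IsAnInt (f 1 x y)

/-!
Move `ε` units of the first commodity from the path `u → z → v` onto the path `u → y → v`, and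
`ε` units of the second commodity the other way. The load of every arc and the net flow of each
commodity at every vertex are unchanged, so the result is again a 2-commodity flow with the same
values. Take for `ε` the least of the eight distances from the values on the four arcs to the next
integer in the direction in which they move: no value drops below its floor, so all stay
non-negative, and at least one becomes an integer, so one of the four bi-fractional arcs stops
being bi-fractional while no fractional arc is created.
-/

lemma isAnInt_iff_fract_eq_zero {x : ℝ} : IsAnInt x ↔ Int.fract x = 0 := by
  rw [Int.fract_eq_zero_iff]
  exact ⟨fun ⟨n, hn⟩ => ⟨n, hn.symm⟩, fun ⟨n, hn⟩ => ⟨n, hn.symm⟩⟩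

section Rounding

variable {x c : ℝ}

lemma fract_neg_mul_pos (hc : c = 1 ∨ c = -1) (hx : ¬ IsAnInt x) :
    0 < Int.fract (-(c * x)) := by
  rw [isAnInt_iff_fract_eq_zero] at hx
  refine (Int.fract_nonneg _).lt_of_ne fun h => hx ?_
  rcases hc with rfl | rfl
  · simpa [Int.fract_neg_eq_zero] using h.symm
  · simpa using h.symm

lemma isAnInt_add_mul_fract_neg_mul (hc : c = 1 ∨ c = -1) :
    IsAnInt (x + c * Int.fract (-(c * x))) := by
  rcases hc with rfl | rfl
  · exact ⟨-⌊-x⌋, by rw [one_mul, one_mul, Int.fract, Int.cast_neg]; ring⟩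
  · exact ⟨⌊x⌋, by simp only [neg_one_mul, neg_neg]; linarith [Int.self_sub_fract x]⟩

lemma floor_le_add_mul_of_le_fract (hc : c = 1 ∨ c = -1) {t : ℝ} (ht₀ : 0 ≤ t)
    (ht : t ≤ Int.fract (-(c * x))) : (⌊x⌋ : ℝ) ≤ x + c * t := by
  rcases hc with rfl | rfl
  · linarith [Int.floor_le x]
  · linarith [Int.self_sub_fract x, show t ≤ Int.fract x by simpa using ht]

end Rounding

section Exchange

variable {V : Type*}

def IsCirculation [Fintype V] (d : V → V → ℝ) : Prop :=
  ∀ q, ∑ a, d a q = ∑ b, d q b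

def exchangeAlong (f : Fin 2 → V → V → ℝ) (d : V → V → ℝ) (ε : ℝ) : Fin 2 → V → V → ℝ :=
  fun i a b => f i a b + ![1, -1] i * d a b * ε

variable {f : Fin 2 → V → V → ℝ} {d : V → V → ℝ} {ε : ℝ}

lemma exchangeAlong_of_eq_zero {a b : V} (h : d a b = 0) (i : Fin 2) :
    exchangeAlong f d ε i a b = f i a b := by
  simp [exchangeAlong, h]

lemma exchangeAlong_zero_add_one (a b : V) :
    exchangeAlong f d ε 0 a b + exchangeAlong f d ε 1 a b = f 0 a b + f 1 a b := by
  simp only [exchangeAlong, Matrix.cons_val_zero, Matrix.cons_val_one]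
  ring

lemma sum_exchangeAlong_in [Fintype V] (i : Fin 2) (q : V) :
    ∑ a, exchangeAlong f d ε i a q = ∑ a, f i a q + ![1, -1] i * ε * ∑ a, d a q := by
  simp only [exchangeAlong, Finset.sum_add_distrib, Finset.mul_sum]
  congr 1
  exact Finset.sum_congr rfl fun a _ => by ring

lemma sum_exchangeAlong_out [Fintype V] (i : Fin 2) (q : V) :
    ∑ b, exchangeAlong f d ε i q b = ∑ b, f i q b + ![1, -1] i * ε * ∑ b, d q b := by
  simp only [exchangeAlong, Finset.sum_add_distrib, Finset.mul_sum]
  congr 1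
  exact Finset.sum_congr rfl fun a _ => by ring

lemma IsCirculation.flowValue_exchangeAlong [Fintype V] (hd : IsCirculation d) (s : V) (i : Fin 2) :
    flowValue s (exchangeAlong f d ε i) = flowValue s (f i) := by
  simp only [flowValue, sum_exchangeAlong_in, sum_exchangeAlong_out, hd s]
  ring

lemma isFracFlow_exchangeAlong [Fintype V] {A : V → V → Prop} {cap : V → V → ℕ} {s t : Fin 2 → V}
    (hf : IsFracFlow A cap s t f) (hd : IsCirculation d) (hdA : ∀ a b, d a b ≠ 0 → A a b)
    (hnonneg : ∀ i a b, 0 ≤ exchangeAlong f d ε i a b) :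
    IsFracFlow A cap s t (exchangeAlong f d ε) := by
  obtain ⟨-, hsupp, hcap, hcons⟩ := hf
  refine ⟨hnonneg, fun i a b hab => ?_, fun a b => ?_, fun i q hs ht => ?_⟩
  · rw [exchangeAlong_of_eq_zero (not_imp_comm.mp (hdA a b) hab)]
    exact hsupp i a b hab
  · rw [exchangeAlong_zero_add_one]
    exact hcap a b
  · rw [sum_exchangeAlong_in, sum_exchangeAlong_out, hcons i q hs ht, hd q]

lemma fracArcs_exchangeAlong_le [Fintype V]
    (hfrac : ∀ a b, d a b ≠ 0 → ¬ IsAnInt (f 0 a b) ∨ ¬ IsAnInt (f 1 a b)) :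
    fracArcs (exchangeAlong f d ε) ≤ fracArcs f := by
  refine Set.ncard_le_ncard (fun ⟨a, b⟩ hab => ?_)
  by_cases h : d a b = 0
  · simpa only [Set.mem_ofPred_eq, exchangeAlong_of_eq_zero h] using hab
  · exact hfrac a b h

lemma biFracArcs_exchangeAlong_lt [Fintype V] (hbi : ∀ a b, d a b ≠ 0 → BiFrac f a b)
    (hint : ∃ i a b, d a b ≠ 0 ∧ IsAnInt (exchangeAlong f d ε i a b)) :
    biFracArcs (exchangeAlong f d ε) < biFracArcs f := by
  have hsub : {p : V × V | BiFrac (exchangeAlong f d ε) p.1 p.2} ⊆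
      {p : V × V | BiFrac f p.1 p.2} := fun ⟨a, b⟩ hab => by
    by_cases h : d a b = 0
    · simpa only [Set.mem_ofPred_eq, BiFrac, exchangeAlong_of_eq_zero h] using hab
    · exact hbi a b h
  obtain ⟨i, a, b, hab, hi⟩ := hint
  refine Set.ncard_lt_ncard ((Set.ssubset_iff_of_subset hsub).mpr ⟨(a, b), hbi a b hab, ?_⟩)
  rintro ⟨h0, h1⟩
  fin_cases i
  exacts [h0 hi, h1 hi]

lemma exists_exchangeAlong_nonneg_and_isAnInt [Fintype V] (hf : ∀ i a b, 0 ≤ f i a b)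
    (hd : ∀ a b, d a b ≠ 0 → d a b = 1 ∨ d a b = -1)
    (hbi : ∀ a b, d a b ≠ 0 → BiFrac f a b) {a₀ b₀ : V} (hd₀ : d a₀ b₀ ≠ 0) :
    ∃ ε, (∀ i a b, 0 ≤ exchangeAlong f d ε i a b) ∧
      ∃ i a b, d a b ≠ 0 ∧ IsAnInt (exchangeAlong f d ε i a b) := by
  classical
  let c : Fin 2 → V → V → ℝ := fun i a b => ![1, -1] i * d a b
  have hc : ∀ i a b, d a b ≠ 0 → c i a b = 1 ∨ c i a b = -1 := by
    intro i a b hab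
    fin_cases i <;> rcases hd a b hab with h | h <;> simp [c, h]
  have hfrac : ∀ i a b, d a b ≠ 0 → ¬ IsAnInt (f i a b) := by
    intro i a b hab
    fin_cases i
    exacts [(hbi a b hab).1, (hbi a b hab).2]
  -- `Int.fract (-(c * x))` is how far `x` can move in direction `c = ±1` before it hits an integer
  let τ : Fin 2 × V × V → ℝ := fun ⟨i, a, b⟩ => Int.fract (-(c i a b * f i a b))
  let E := Finset.univ.filter fun p : Fin 2 × V × V => d p.2.1 p.2.2 ≠ 0
  have hE : E.Nonempty := ⟨(0, a₀, b₀), by simpa [E] using hd₀⟩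
  refine ⟨E.inf' hE τ, fun i a b => ?_, ?_⟩
  · by_cases hab : d a b = 0
    · rw [exchangeAlong_of_eq_zero hab]
      exact hf i a b
    have hmem : (i, a, b) ∈ E := by simpa [E] using hab
    have hpos : 0 < E.inf' hE τ := (Finset.lt_inf'_iff hE).mpr fun p hp =>
      fract_neg_mul_pos (hc _ _ _ (Finset.mem_filter.mp hp).2)
        (hfrac _ _ _ (Finset.mem_filter.mp hp).2)
    calc (0 : ℝ) ≤ ⌊f i a b⌋ := by exact_mod_cast Int.floor_nonneg.mpr (hf i a b)
      _ ≤ _ := floor_le_add_mul_of_le_fract (hc i a b hab) hpos.le (Finset.inf'_le τ hmem)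
  · obtain ⟨⟨i, a, b⟩, hmem, heq⟩ := Finset.exists_mem_eq_inf' hE τ
    have hab : d a b ≠ 0 := (Finset.mem_filter.mp hmem).2
    refine ⟨i, a, b, hab, ?_⟩
    rw [heq]
    exact isAnInt_add_mul_fract_neg_mul (hc i a b hab)

theorem IsFracFlow.exists_biFracArcs_lt_of_isCirculation [Fintype V] {A : V → V → Prop}
    {cap : V → V → ℕ} {s t : Fin 2 → V} (hf : IsFracFlow A cap s t f) (hd : IsCirculation d)
    (hdA : ∀ a b, d a b ≠ 0 → A a b) (hd₁ : ∀ a b, d a b ≠ 0 → d a b = 1 ∨ d a b = -1)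
    (hbi : ∀ a b, d a b ≠ 0 → BiFrac f a b) {a₀ b₀ : V} (hd₀ : d a₀ b₀ ≠ 0) :
    ∃ g : Fin 2 → V → V → ℝ, IsFracFlow A cap s t g ∧
      (∀ j, flowValue (s j) (g j) = flowValue (s j) (f j)) ∧
      fracArcs g ≤ fracArcs f ∧
      biFracArcs g < biFracArcs f := by
  obtain ⟨ε, hnonneg, hint⟩ := exists_exchangeAlong_nonneg_and_isAnInt hf.1 hd₁ hbi hd₀
  exact ⟨exchangeAlong f d ε, isFracFlow_exchangeAlong hf hd hdA hnonneg,
    fun j => hd.flowValue_exchangeAlong (s j) j,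
    fracArcs_exchangeAlong_le fun a b hab => Or.inl (hbi a b hab).1,
    biFracArcs_exchangeAlong_lt hbi hint⟩

end Exchange

section TwoPath

variable {V : Type*} [DecidableEq V]

def twoPath (u y v : V) : V → V → ℝ :=
  fun a b => (if a = u ∧ b = y then 1 else 0) + (if a = y ∧ b = v then 1 else 0)

variable {u v y z : V}

lemma sum_twoPath_in [Fintype V] (q : V) :
    ∑ a, twoPath u y v a q = (if q = y then 1 else 0) + (if q = v then 1 else 0) := by
  simp [twoPath, Finset.sum_add_distrib, ite_and]

lemma sum_twoPath_out [Fintype V] (q : V) :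
    ∑ b, twoPath u y v q b = (if q = u then 1 else 0) + (if q = y then 1 else 0) := by
  simp [twoPath, Finset.sum_add_distrib, ite_and]

lemma isCirculation_twoPath_sub_twoPath [Fintype V] :
    IsCirculation (twoPath u y v - twoPath u z v) := by
  intro q
  simp only [Pi.sub_apply, Finset.sum_sub_distrib, sum_twoPath_in, sum_twoPath_out]
  ring

lemma arc_of_twoPath_sub_twoPath_ne_zero {a b : V} (h : (twoPath u y v - twoPath u z v) a b ≠ 0) :
    (a = u ∧ b = y) ∨ (a = y ∧ b = v) ∨ (a = u ∧ b = z) ∨ (a = z ∧ b = v) := by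
  simp only [twoPath, Pi.sub_apply] at h
  split_ifs at h <;> first | tauto | norm_num at h

lemma twoPath_sub_twoPath_eq_one_or_neg_one (hyu : y ≠ u) (hzu : z ≠ u) (hyz : y ≠ z)
    {a b : V} (h : (twoPath u y v - twoPath u z v) a b ≠ 0) :
    (twoPath u y v - twoPath u z v) a b = 1 ∨ (twoPath u y v - twoPath u z v) a b = -1 := by
  rcases arc_of_twoPath_sub_twoPath_ne_zero h with
    ⟨rfl, rfl⟩ | ⟨rfl, rfl⟩ | ⟨rfl, rfl⟩ | ⟨rfl, rfl⟩ <;>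
    simp [twoPath, hyu, hzu, hyz, hyu.symm, hzu.symm, hyz.symm]

end TwoPath

theorem case4_rule (V : Type) [Fintype V] [DecidableEq V]
    (A : V → V → Prop) (cap : V → V → ℕ) (s t : Fin 2 → V)
    (X : Finset V)
    (f : Fin 2 → V → V → ℝ) (hf : IsFracFlow A cap s t f)
    (u v y z : V) (hu : u ∈ X) (hy : y ∉ X) (hz : z ∉ X)
    (hyz : y ≠ z)
    (hA : A u y ∧ A y v ∧ A u z ∧ A z v)
    (hbi : BiFrac f u y ∧ BiFrac f y v ∧ BiFrac f u z ∧ BiFrac f z v) :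
    ∃ g : Fin 2 → V → V → ℝ, IsFracFlow A cap s t g ∧
      (∀ j, flowValue (s j) (g j) = flowValue (s j) (f j)) ∧
      fracArcs g ≤ fracArcs f ∧
      biFracArcs g < biFracArcs f := by
  have hyu : y ≠ u := fun h => hy (h ▸ hu)
  have hzu : z ≠ u := fun h => hz (h ▸ hu)
  have harcs : ∀ a b, (twoPath u y v - twoPath u z v) a b ≠ 0 → A a b ∧ BiFrac f a b := by
    intro a b h
    rcases arc_of_twoPath_sub_twoPath_ne_zero h with
      ⟨rfl, rfl⟩ | ⟨rfl, rfl⟩ | ⟨rfl, rfl⟩ | ⟨rfl, rfl⟩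
    exacts [⟨hA.1, hbi.1⟩, ⟨hA.2.1, hbi.2.1⟩, ⟨hA.2.2.1, hbi.2.2.1⟩, ⟨hA.2.2.2, hbi.2.2.2⟩]
  have hne : (twoPath u y v - twoPath u z v) u y ≠ 0 := by
    simp [twoPath, hyz, hyu.symm, hzu.symm]
  exact hf.exists_biFracArcs_lt_of_isCirculation isCirculation_twoPath_sub_twoPath
    (fun a b h => (harcs a b h).1)
    (fun a b h => twoPath_sub_twoPath_eq_one_or_neg_one hyu hzu hyz h)
    (fun a b h => (harcs a b h).2) hne
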